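/- arXiv:1909.11773 — 4 statements merged into one kernel-verified Lean document; each statement's English description precedes it below -/
import Mathlib

section
/- Let A and B be disjoint subsets of {1,…,p} with |A| + |B| ≤ 6s*, and let X_B be the n×|B| submatrix of X with columns (X_j : j ∈ B). Then for every t ∈ ℝ^B, ‖X_Bᵀ (I − Φ_A) X_B t‖ ≥ n ν ‖t‖; equivalently, the smallest eigenvalue of the positive definite matrix X_Bᵀ(I − Φ_A)X_B is at least nν. -/
open scoped BigOperators
open Finset

noncomputable section

/-- Span of the columns `X j`, `j ∈ S`. -/
def colSpan {n p : ℕ} (X : Fin p → EuclideanSpace ℝ (Fin n)) (S : Finset (Fin p)) :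
    Submodule ℝ (EuclideanSpace ℝ (Fin n)) :=
  Submodule.span ℝ (X '' ↑S)

/-- `Φ_S`, the orthogonal projection of ℝ^n onto the span of the columns in `S`. -/
noncomputable def proj {n p : ℕ} (X : Fin p → EuclideanSpace ℝ (Fin n)) (S : Finset (Fin p)) :
    EuclideanSpace ℝ (Fin n) →ₗ[ℝ] EuclideanSpace ℝ (Fin n) :=
  (colSpan X S).subtype ∘ₗ ((colSpan X S).orthogonalProjectionOnto).toLinearMap

/-- Restricted eigenvalue condition: `‖X_S w‖² ≥ n ν ‖w‖²` for all `S` with `|S| ≤ m`. -/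
def RECond {n p : ℕ} (X : Fin p → EuclideanSpace ℝ (Fin n)) (ν : ℝ) (m : ℕ) : Prop :=
  ∀ S : Finset (Fin p), S.card ≤ m → ∀ w : Fin p → ℝ,
    (n : ℝ) * ν * ∑ j ∈ S, w j ^ 2 ≤ ‖∑ j ∈ S, w j • X j‖ ^ 2

end

/-!
Let `r = (I − Φ_A) X_B t`. Since `r ⊥ Φ_A X_B t`, we have `‖r‖² = ⟪X_B t, r⟫ = ∑_{j ∈ B} t_j ⟪X_j, r⟫`,
which Cauchy–Schwarz bounds by `‖t‖ · ‖X_Bᵀ r‖`. On the other hand `Φ_A X_B t` is a combination of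
the columns in `A`, so `r = X_{A ∪ B} c` with `c = t` on `B` (as `A ∩ B = ∅`), and the
restricted eigenvalue condition on `A ∪ B` gives `‖r‖² ≥ nν ‖c‖² ≥ nν ‖t‖²`. Dividing by `‖t‖`
gives the claim.
-/

theorem Submodule.inner_self_sub_starProjection {E : Type*} [NormedAddCommGroup E]
    [InnerProductSpace ℝ E] (K : Submodule ℝ E) [K.HasOrthogonalProjection] (v : E) :
    inner ℝ v (v - K.starProjection v) = ‖v - K.starProjection v‖ ^ 2 := by
  have hperp : inner ℝ (K.starProjection v) (v - K.starProjection v) = 0 :=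
    inner_eq_zero_symm.mp (K.starProjection_inner_eq_zero v _ (K.starProjection_apply_mem v))
  rw [← real_inner_self_eq_norm_sq, inner_sub_left, hperp, sub_zero]

theorem proj_apply {n p : ℕ} (X : Fin p → EuclideanSpace ℝ (Fin n)) (S : Finset (Fin p))
    (v : EuclideanSpace ℝ (Fin n)) : proj X S v = (colSpan X S).starProjection v :=
  rfl

theorem exists_sum_sub_eq_sum_union {n p : ℕ} (X : Fin p → EuclideanSpace ℝ (Fin n))
    {A B : Finset (Fin p)} (hAB : Disjoint A B) (t : Fin p → ℝ) {w : EuclideanSpace ℝ (Fin n)}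
    (hw : w ∈ colSpan X A) :
    ∃ c : Fin p → ℝ, (∀ j ∈ B, c j = t j) ∧
      (∑ k ∈ B, t k • X k) - w = ∑ j ∈ A ∪ B, c j • X j := by
  classical
  obtain ⟨l, rfl⟩ := (Submodule.mem_span_image_finset_iff_exists_fun' ℝ).mp hw
  refine ⟨B.piecewise t (-l), fun j hj => B.piecewise_eq_of_mem _ _ hj, ?_⟩
  have hA : ∑ j ∈ A, B.piecewise t (-l) j • X j = -∑ j ∈ A, l j • X j := by
    rw [← sum_neg_distrib]
    refine sum_congr rfl fun j hj => ?_
    rw [B.piecewise_eq_of_notMem _ _ (disjoint_left.mp hAB hj), Pi.neg_apply, neg_smul]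
  have hB : ∑ j ∈ B, B.piecewise t (-l) j • X j = ∑ j ∈ B, t j • X j :=
    sum_congr rfl fun j hj => by rw [B.piecewise_eq_of_mem _ _ hj]
  rw [sum_union hAB, hA, hB, sub_eq_add_neg, add_comm]

theorem RECond.mul_sum_sq_le_norm_sq_sub_proj {n p m : ℕ} {X : Fin p → EuclideanSpace ℝ (Fin n)}
    {ν : ℝ} (hRE : RECond X ν m) (hν : 0 ≤ ν) {A B : Finset (Fin p)} (hAB : Disjoint A B)
    (hm : A.card + B.card ≤ m) (t : Fin p → ℝ) :
    (n : ℝ) * ν * ∑ j ∈ B, t j ^ 2 ≤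
      ‖(∑ k ∈ B, t k • X k) - proj X A (∑ k ∈ B, t k • X k)‖ ^ 2 := by
  obtain ⟨c, hcB, hc⟩ := exists_sum_sub_eq_sum_union X hAB t
    ((colSpan X A).starProjection_apply_mem (∑ k ∈ B, t k • X k))
  rw [proj_apply, hc]
  calc (n : ℝ) * ν * ∑ j ∈ B, t j ^ 2 = n * ν * ∑ j ∈ B, c j ^ 2 :=
        congrArg _ (sum_congr rfl fun j hj => by rw [hcB j hj])
    _ ≤ n * ν * ∑ j ∈ A ∪ B, c j ^ 2 :=
        mul_le_mul_of_nonneg_left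
          (sum_le_sum_of_subset_of_nonneg subset_union_right fun j _ _ => sq_nonneg (c j))
          (by positivity)
    _ ≤ ‖∑ j ∈ A ∪ B, c j • X j‖ ^ 2 :=
        hRE (A ∪ B) ((card_union_le A B).trans hm) c

theorem le_of_mul_sq_le_mul {a x y : ℝ} (hx : 0 ≤ x) (hy : 0 ≤ y) (h : a * x ^ 2 ≤ x * y) :
    a * x ≤ y := by
  rcases hx.eq_or_lt with rfl | hx
  · simpa using hy
  · exact le_of_mul_le_mul_right (by linarith) hx

theorem stmt1_general {n p s : ℕ}
    (X : Fin p → EuclideanSpace ℝ (Fin n))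
    {ν : ℝ} (hν : 0 < ν) (hRE : RECond X ν (6 * s))
    (A B : Finset (Fin p)) (hdisj : Disjoint A B) (hcard : A.card + B.card ≤ 6 * s)
    (t : Fin p → ℝ) :
    (n : ℝ) * ν * Real.sqrt (∑ j ∈ B, t j ^ 2) ≤
      Real.sqrt (∑ j ∈ B,
        (inner ℝ (X j) ((∑ k ∈ B, t k • X k) - proj X A (∑ k ∈ B, t k • X k)) : ℝ) ^ 2) := by
  set v := ∑ k ∈ B, t k • X k
  set r := v - proj X A v
  have hlower : (n : ℝ) * ν * ∑ j ∈ B, t j ^ 2 ≤ ‖r‖ ^ 2 :=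
    hRE.mul_sum_sq_le_norm_sq_sub_proj hν.le hdisj hcard t
  have hnorm : ‖r‖ ^ 2 = ∑ j ∈ B, t j * inner ℝ (X j) r :=
    calc ‖r‖ ^ 2 = inner ℝ v r := ((colSpan X A).inner_self_sub_starProjection v).symm
      _ = ∑ j ∈ B, t j * inner ℝ (X j) r := by
        rw [sum_inner]
        exact sum_congr rfl fun j _ => real_inner_smul_left _ _ _
  have hCS := Real.sum_mul_le_sqrt_mul_sqrt B t (fun j => inner ℝ (X j) r)
  refine le_of_mul_sq_le_mul (Real.sqrt_nonneg _) (Real.sqrt_nonneg _) ?_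
  rw [Real.sq_sqrt (sum_nonneg fun j _ => sq_nonneg (t j))]
  linarith

/-- for disjoint A, B with |A|+|B| ≤ 6s*, ‖X_Bᵀ (I − Φ_A) X_B t‖ ≥ nν‖t‖.
The vector X_Bᵀ (I − Φ_A) X_B t ∈ ℝ^B has j-th coordinate ⟨X_j, (I − Φ_A) X_B t⟩. -/
theorem stmt1 {n p s : ℕ} (hn : 0 < n) (hp : 0 < p) (hs : 0 < s)
    (X : Fin p → EuclideanSpace ℝ (Fin n))
    (hX : ∀ j, ‖X j‖ = Real.sqrt n)
    {ν : ℝ} (hν : 0 < ν) (hRE : RECond X ν (6 * s))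
    (A B : Finset (Fin p)) (hdisj : Disjoint A B) (hcard : A.card + B.card ≤ 6 * s)
    (t : Fin p → ℝ) :
    (n : ℝ) * ν * Real.sqrt (∑ j ∈ B, t j ^ 2) ≤
      Real.sqrt (∑ j ∈ B,
        (inner ℝ (X j) ((∑ k ∈ B, t k • X k) - proj X A (∑ k ∈ B, t k • X k)) : ℝ) ^ 2) :=
  stmt1_general X hν hRE A B hdisj hcard t
end

section
/- Let 𝒢 be any map on subsets of {1,…,p} satisfying: 𝒢(T) = T; if S ≠ T, |S \ T| ≤ 3s* and T ⊆ S then 𝒢(S) = S \ {i} for some i ∈ S \ T; if |S \ T| ≤ 3s* and T ⊄ S then 𝒢(S) = S ∪ {i} for some i ∈ T \ S; and if |S \ T| > 3s* then 𝒢(S) = T̂, where |T| = s* ≥ 1 and |T̂| ≤ 2s*. Then for every S ⊆ {1,…,p} there exists k ≤ 1 + 4s* with the k-fold iterate 𝒢^{(k)}(S) = T. Consequently, in the tree on subsets with edges {S, 𝒢(S)} rooted at T, the graph distance between any two subsets I and F is at most 2 + 8s*. -/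
open scoped BigOperators
open Finset

lemma walk_of_iterate {α : Type*} [DecidableEq α] (G : α → α) (T : α) :
    ∀ (k : ℕ) (S : α), G^[k] S = T →
      ∃ w : (SimpleGraph.fromRel fun A B => G A = B).Walk S T, w.length ≤ k := by
  intro k
  induction k with
  | zero => intro S h; subst h; exact ⟨SimpleGraph.Walk.nil, by simp⟩
  | succ k ih =>
    intro S h
    rw [Function.iterate_succ_apply] at h
    by_cases hSS : S = G S
    · obtain ⟨w, hw⟩ := ih S (by rw [hSS]; exact h)
      exact ⟨w, hw.trans (Nat.le_succ k)⟩
    · obtain ⟨w, hw⟩ := ih (G S) h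
      refine ⟨SimpleGraph.Walk.cons ?_ w, ?_⟩
      · exact (SimpleGraph.fromRel_adj _ _ _).mpr ⟨hSS, Or.inl rfl⟩
      · simpa using Nat.succ_le_succ hw

/-- the map 𝒢 reaches T from any state in at most 1 + 4s* steps, and in the
tree with edges {S, 𝒢(S)} the graph distance between any two subsets is at most 2 + 8s*. -/
theorem stmt11 {p s : ℕ} (hp : 0 < p) (hs : 0 < s) (hsp : 6 * s ≤ p)
    (T That : Finset (Fin p)) (hTcard : T.card = s) (hThatcard : That.card ≤ 2 * s)
    (Gmap : Finset (Fin p) → Finset (Fin p))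
    (hGT : Gmap T = T)
    (hG1 : ∀ S : Finset (Fin p), S ≠ T → (S \ T).card ≤ 3 * s → T ⊆ S →
      ∃ i ∈ S \ T, Gmap S = S.erase i)
    (hG2 : ∀ S : Finset (Fin p), (S \ T).card ≤ 3 * s → ¬ T ⊆ S →
      ∃ i ∈ T \ S, Gmap S = insert i S)
    (hG3 : ∀ S : Finset (Fin p), 3 * s < (S \ T).card → Gmap S = That) :
    (∀ S : Finset (Fin p), ∃ k ≤ 1 + 4 * s, Gmap^[k] S = T) ∧
    (∀ I F : Finset (Fin p),
      ∃ w : (SimpleGraph.fromRel fun A B : Finset (Fin p) => Gmap A = B).Walk I F,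
        w.length ≤ 2 + 8 * s) := by
  -- key lemma: if (S\T).card ≤ 3s and the potential is ≤ n, reach T in ≤ n steps
  have key : ∀ n : ℕ, ∀ S : Finset (Fin p), (S \ T).card ≤ 3 * s →
      (S \ T).card + (T \ S).card ≤ n → ∃ k ≤ n, Gmap^[k] S = T := by
    intro n
    induction n with
    | zero =>
      intro S h1 h2
      have e1 : S \ T = ∅ := card_eq_zero.mp (Nat.le_zero.mp (le_trans (Nat.le_add_right _ _) h2))
      have e2 : T \ S = ∅ := card_eq_zero.mp (Nat.le_zero.mp (le_trans (Nat.le_add_left _ _) h2))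
      have : S = T := Subset.antisymm (sdiff_eq_empty_iff_subset.mp e1)
        (sdiff_eq_empty_iff_subset.mp e2)
      exact ⟨0, Nat.zero_le _, this⟩
    | succ n ih =>
      intro S h1 h2
      by_cases hST : S = T
      · exact ⟨0, Nat.zero_le _, hST⟩
      by_cases hTS : T ⊆ S
      · obtain ⟨i, hi, hG⟩ := hG1 S hST h1 hTS
        obtain ⟨hiS, hiT⟩ := mem_sdiff.mp hi
        set S' := S.erase i with hS'
        have hsd : S' \ T = (S \ T).erase i := by
          ext x; simp [hS', mem_sdiff, mem_erase]; tauto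
        have hcard : (S' \ T).card = (S \ T).card - 1 := by
          rw [hsd, card_erase_of_mem hi]
        have hTS' : T ⊆ S' := fun x hx => mem_erase.mpr ⟨fun h => hiT (h ▸ hx), hTS hx⟩
        have hTsd' : T \ S' = ∅ := sdiff_eq_empty_iff_subset.mpr hTS'
        have hpos : 0 < (S \ T).card := card_pos.mpr ⟨i, hi⟩
        obtain ⟨k, hk, hiter⟩ := ih S' (by omega) (by rw [hcard, hTsd']; simp; omega)
        refine ⟨k + 1, by omega, ?_⟩
        rw [Function.iterate_succ_apply, hG, hiter]
      · obtain ⟨i, hi, hG⟩ := hG2 S h1 hTS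
        obtain ⟨hiT, hiS⟩ := mem_sdiff.mp hi
        set S' := insert i S with hS'
        have hsd : S' \ T = S \ T := by
          rw [hS', insert_sdiff_of_mem _ hiT]
        have hsd2 : T \ S' = (T \ S).erase i := by
          ext x; simp [hS', mem_sdiff, mem_insert, mem_erase]; tauto
        have hcard2 : (T \ S').card = (T \ S).card - 1 := by
          rw [hsd2, card_erase_of_mem hi]
        have hpos : 0 < (T \ S).card := card_pos.mpr ⟨i, hi⟩
        obtain ⟨k, hk, hiter⟩ := ih S' (by rw [hsd]; exact h1) (by rw [hsd, hcard2]; omega)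
        refine ⟨k + 1, by omega, ?_⟩
        rw [Function.iterate_succ_apply, hG, hiter]
  have main : ∀ S : Finset (Fin p), ∃ k ≤ 1 + 4 * s, Gmap^[k] S = T := by
    intro S
    by_cases h1 : (S \ T).card ≤ 3 * s
    · have hT : (T \ S).card ≤ s := hTcard ▸ card_le_card (sdiff_subset)
      obtain ⟨k, hk, hiter⟩ := key (4 * s) S h1 (by omega)
      exact ⟨k, by omega, hiter⟩
    · push_neg at h1
      have hG := hG3 S h1
      have h1' : (That \ T).card ≤ 3 * s :=
        le_trans (card_le_card sdiff_subset) (by omega)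
      have hT : (T \ That).card ≤ s := hTcard ▸ card_le_card (sdiff_subset)
      have h1'' : (That \ T).card ≤ 2 * s := le_trans (card_le_card sdiff_subset) hThatcard
      obtain ⟨k, hk, hiter⟩ := key (3 * s) That h1' (by omega)
      refine ⟨k + 1, by omega, ?_⟩
      rw [Function.iterate_succ_apply, hG, hiter]
  refine ⟨main, fun I F => ?_⟩
  obtain ⟨k1, hk1, h1⟩ := main I
  obtain ⟨k2, hk2, h2⟩ := main F
  obtain ⟨w1, hw1⟩ := walk_of_iterate Gmap T k1 I h1
  obtain ⟨w2, hw2⟩ := walk_of_iterate Gmap T k2 F h2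
  refine ⟨w1.append w2.reverse, ?_⟩
  rw [SimpleGraph.Walk.length_append, SimpleGraph.Walk.length_reverse]
  omega
end

section
/- Let T̂ ⊆ {1,…,p} satisfy |T̂| ≤ 2s* and ‖(I − Φ_{T̂})Xθ‖² ≤ c s* log p, assume ‖ε‖² ≤ 2n, event E_n holds, p ≥ 3, D ≥ max(2, 4L/β). Then, with C = 2D + (4 + 2c)/β, the stationary probability of T̂ satisfies π(T̂) ≥ e^{−1} · exp(−C s* log p); in particular log(1/π(T̂)) ≤ 1 + C s* log p. -/
open scoped BigOperators
open Finset

noncomputable section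

/-- The unnormalized weight exp(G(S,Y) − m(S)), where G(S,Y) = ‖Φ_S Y‖²/β and
m(S) = D|S| log p + (2/β) trace(Φ_S) + (4n/β) 1{|S| > 4s}. -/
noncomputable def postWt {n p : ℕ} (X : Fin p → EuclideanSpace ℝ (Fin n))
    (Y : EuclideanSpace ℝ (Fin n)) (β D : ℝ) (s : ℕ) (S : Finset (Fin p)) : ℝ :=
  Real.exp (‖proj X S Y‖ ^ 2 / β -
    (D * S.card * Real.log p +
      2 * LinearMap.trace ℝ (EuclideanSpace ℝ (Fin n)) (proj X S) / β +
      if 4 * s < S.card then 4 * n / β else 0))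

/-- The probability distribution π(S) ∝ exp(G(S,Y) − m(S)) on subsets of {1,…,p}. -/
noncomputable def postPi {n p : ℕ} (X : Fin p → EuclideanSpace ℝ (Fin n))
    (Y : EuclideanSpace ℝ (Fin n)) (β D : ℝ) (s : ℕ) (S : Finset (Fin p)) : ℝ :=
  postWt X Y β D s S / ∑ S' : Finset (Fin p), postWt X Y β D s S'

/-!
For any model `S`, compare its weight with that of `T̂`. If `|S| ≤ 4s*`, pass to `R = S ∪ T̂`:
`‖Φ_S Y‖² ≤ ‖Φ_T̂ Y‖² + ‖(Φ_R - Φ_T̂) Y‖²`, and the increment splits into a signal part, bounded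
by the approximation error `‖(I - Φ_T̂) Xθ‖²`, and a noise part `‖(Φ_R - Φ_T̂) ε‖²`, which E_n and
the restricted eigenvalue condition bound by `L log p` per column of `R \ T̂`. If `|S| > 4s*`, the
noise `‖ε‖² ≤ 2n` is paid for by the penalty `4n/β`. With `D ≥ 1 + 2L/β` this gives
`w(S) ≤ w(T̂) · p^(C s* - |S|)`, and `∑_S p^(-|S|) = (1 + 1/p)^p ≤ e`.
-/

namespace SubsetSelection

theorem norm_add_sq_le {E : Type*} [SeminormedAddCommGroup E] (a b : E) :
    ‖a + b‖ ^ 2 ≤ 2 * (‖a‖ ^ 2 + ‖b‖ ^ 2) :=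
  (pow_le_pow_left₀ (norm_nonneg _) (norm_add_le a b) 2).trans add_sq_le

variable {n p : ℕ} {X : Fin p → EuclideanSpace ℝ (Fin n)} {S R : Finset (Fin p)}
  {y : EuclideanSpace ℝ (Fin n)}

theorem proj_apply (y : EuclideanSpace ℝ (Fin n)) :
    proj X S y = (colSpan X S).starProjection y := rfl

theorem proj_mem (y : EuclideanSpace ℝ (Fin n)) : proj X S y ∈ colSpan X S :=
  (colSpan X S).starProjection_apply_mem y

theorem proj_eq_self (h : y ∈ colSpan X S) : proj X S y = y :=
  Submodule.starProjection_eq_self_iff.2 h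

theorem sub_proj_mem_orthogonal (y : EuclideanSpace ℝ (Fin n)) :
    y - proj X S y ∈ (colSpan X S)ᗮ :=
  Submodule.sub_starProjection_mem_orthogonal y

theorem norm_proj_le (y : EuclideanSpace ℝ (Fin n)) : ‖proj X S y‖ ≤ ‖y‖ :=
  (colSpan X S).norm_starProjection_apply_le y

theorem norm_sub_proj_le (y : EuclideanSpace ℝ (Fin n)) : ‖y - proj X S y‖ ≤ ‖y‖ := by
  rw [proj_apply, ← Submodule.starProjection_orthogonal_val]
  exact Submodule.norm_starProjection_apply_le _ y

theorem norm_sq_eq_norm_proj_sq_add (y : EuclideanSpace ℝ (Fin n)) :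
    ‖y‖ ^ 2 = ‖proj X S y‖ ^ 2 + ‖y - proj X S y‖ ^ 2 := by
  rw [proj_apply, ← Submodule.starProjection_orthogonal_val]
  exact Submodule.norm_sq_eq_add_norm_sq_starProjection y _

theorem colSpan_mono (h : S ⊆ R) : colSpan X S ≤ colSpan X R :=
  Submodule.span_mono (Set.image_mono h)

theorem X_mem_colSpan {j : Fin p} (hj : j ∈ S) : X j ∈ colSpan X S :=
  Submodule.subset_span ⟨j, hj, rfl⟩

theorem exists_sum_eq_of_mem_colSpan (h : y ∈ colSpan X S) :
    ∃ w : Fin p → ℝ, ∑ j ∈ S, w j • X j = y := by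
  rw [colSpan, Finsupp.mem_span_image_iff_linearCombination] at h
  obtain ⟨l, hl, rfl⟩ := h
  refine ⟨l, ?_⟩
  rw [Finsupp.linearCombination_apply]
  exact (Finsupp.sum_of_support_subset l ((Finsupp.mem_supported ℝ l).1 hl)
    (fun i a => a • X i) fun _ _ => zero_smul ℝ _).symm

theorem proj_proj_of_subset (h : S ⊆ R) (y : EuclideanSpace ℝ (Fin n)) :
    proj X S (proj X R y) = proj X S y :=
  congr($(Submodule.starProjection_comp_starProjection_of_le (colSpan_mono (X := X) h)) y)

theorem norm_proj_sq_eq_add (h : S ⊆ R) (y : EuclideanSpace ℝ (Fin n)) :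
    ‖proj X R y‖ ^ 2 = ‖proj X S y‖ ^ 2 + ‖proj X R y - proj X S y‖ ^ 2 := by
  rw [norm_sq_eq_norm_proj_sq_add (S := S), proj_proj_of_subset h]

theorem norm_proj_sub_proj_le (h : S ⊆ R) (y : EuclideanSpace ℝ (Fin n)) :
    ‖proj X R y - proj X S y‖ ≤ ‖y - proj X S y‖ := by
  rw [← proj_eq_self (colSpan_mono h (proj_mem (X := X) (S := S) y)), ← map_sub,
    proj_eq_self (colSpan_mono h (proj_mem (X := X) (S := S) y))]
  exact norm_proj_le _

theorem trace_proj :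
    LinearMap.trace ℝ _ (proj X S) = Module.finrank ℝ (colSpan X S) := by
  rw [proj, LinearMap.trace_comp_comm']
  have h : ((colSpan X S).orthogonalProjectionOnto).toLinearMap ∘ₗ (colSpan X S).subtype
      = LinearMap.id := by
    ext x
    simp [Submodule.orthogonalProjectionOnto_mem_subspace_eq_self x]
  rw [h, LinearMap.trace_id]

theorem trace_proj_le_card : LinearMap.trace ℝ _ (proj X S) ≤ S.card := by
  classical
  rw [trace_proj, colSpan, ← Finset.coe_image]
  exact_mod_cast (finrank_span_finset_le_card _).trans Finset.card_image_le

theorem exists_proj_sub_proj_eq_sum (h : S ⊆ R) (y : EuclideanSpace ℝ (Fin n)) :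
    ∃ w : Fin p → ℝ,
      proj X R y - proj X S y = ∑ j ∈ R \ S, w j • (X j - proj X S (X j)) := by
  obtain ⟨w, hw⟩ := exists_sum_eq_of_mem_colSpan (proj_mem (X := X) (S := R) y)
  refine ⟨w, ?_⟩
  rw [← proj_proj_of_subset h, ← hw, map_sum, ← Finset.sum_sub_distrib]
  simp_rw [map_smul, ← smul_sub]
  refine (Finset.sum_subset Finset.sdiff_subset fun j _ hj => ?_).symm
  rw [proj_eq_self (X_mem_colSpan (by simp_all)), sub_self, smul_zero]

theorem norm_proj_sub_proj_sq_eq_inner (h : S ⊆ R) (y : EuclideanSpace ℝ (Fin n)) :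
    ‖proj X R y - proj X S y‖ ^ 2 = inner ℝ (proj X R y - proj X S y) y := by
  set v := proj X R y - proj X S y
  have hvR : v ∈ colSpan X R := sub_mem (proj_mem y) (colSpan_mono h (proj_mem y))
  have hvS : v ∈ (colSpan X S)ᗮ := by
    simpa only [proj_proj_of_subset h] using sub_proj_mem_orthogonal (X := X) (S := S) (proj X R y)
  have hy : y = v + ((y - proj X R y) + proj X S y) := by simp only [v]; abel
  conv_rhs => rw [hy]
  rw [inner_add_right, inner_add_right,
    Submodule.inner_right_of_mem_orthogonal hvR (sub_proj_mem_orthogonal y),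
    Submodule.inner_left_of_mem_orthogonal (proj_mem y) hvS, real_inner_self_eq_norm_sq]
  ring

theorem _root_.RECond.mul_sum_sq_le {ν : ℝ} {m : ℕ} (hRE : RECond X ν m) (hν : 0 ≤ ν)
    (hR : R.card ≤ m) (h : S ⊆ R) (w : Fin p → ℝ) :
    n * ν * ∑ j ∈ R \ S, w j ^ 2 ≤ ‖∑ j ∈ R \ S, w j • (X j - proj X S (X j))‖ ^ 2 := by
  classical
  -- `(I - Φ_S) (∑_{R \ S} w_j X_j)` is a combination of the columns in `R` whose coefficients
  -- off `S` are the `w_j`.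
  obtain ⟨a, ha⟩ := exists_sum_eq_of_mem_colSpan
    (proj_mem (X := X) (S := S) (∑ j ∈ R \ S, w j • X j))
  let u : Fin p → ℝ := fun j => if j ∈ S then -a j else w j
  have hu : ∀ j ∈ R \ S, u j = w j := fun j hj => if_neg (Finset.mem_sdiff.1 hj).2
  have hcomb : ∑ j ∈ R, u j • X j = ∑ j ∈ R \ S, w j • (X j - proj X S (X j)) := by
    have hout : ∑ j ∈ R \ S, u j • X j = ∑ j ∈ R \ S, w j • X j :=
      Finset.sum_congr rfl fun j hj => by rw [hu j hj]
    have hin : ∑ j ∈ S, u j • X j = -∑ j ∈ S, a j • X j := by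
      rw [← Finset.sum_neg_distrib]
      exact Finset.sum_congr rfl fun j hj => by simp only [u, if_pos hj, neg_smul]
    rw [← Finset.sum_sdiff h, hout, hin, ha, ← sub_eq_add_neg, map_sum]
    simp only [map_smul, smul_sub, Finset.sum_sub_distrib]
  calc n * ν * ∑ j ∈ R \ S, w j ^ 2 = n * ν * ∑ j ∈ R \ S, u j ^ 2 := by
        rw [Finset.sum_congr rfl fun j hj => by rw [← hu j hj]]
    _ ≤ n * ν * ∑ j ∈ R, u j ^ 2 := mul_le_mul_of_nonneg_left
        (Finset.sum_le_sum_of_subset_of_nonneg Finset.sdiff_subset fun _ _ _ => sq_nonneg _)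
        (by positivity)
    _ ≤ _ := hcomb ▸ hRE R hR u

theorem norm_proj_sub_proj_sq_le {ν b : ℝ} {m : ℕ} (hn : 0 < n) (hν : 0 < ν) (hb : 0 ≤ b)
    (hRE : RECond X ν m) (hR : R.card ≤ m) (h : S ⊆ R) (ε : EuclideanSpace ℝ (Fin n))
    (hE : ∀ j ∈ R \ S, inner ℝ (X j - proj X S (X j)) ε ^ 2 ≤ n * ν * b) :
    ‖proj X R ε - proj X S ε‖ ^ 2 ≤ (R \ S).card * b := by
  obtain ⟨w, hw⟩ := exists_proj_sub_proj_eq_sum (X := X) h ε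
  set v := proj X R ε - proj X S ε with hv
  set W := ∑ j ∈ R \ S, w j ^ 2
  have hnν : 0 < n * ν := by positivity
  have hlower : n * ν * W ≤ ‖v‖ ^ 2 := by
    simpa only [hw] using hRE.mul_sum_sq_le hν.le hR h w
  have hupper : (‖v‖ ^ 2) ^ 2 ≤ W * ((R \ S).card * (n * ν * b)) := by
    have hinner : ‖v‖ ^ 2 = ∑ j ∈ R \ S, w j * inner ℝ (X j - proj X S (X j)) ε := by
      rw [hv, norm_proj_sub_proj_sq_eq_inner h, ← hv, hw, sum_inner]
      simp only [real_inner_smul_left]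
    calc (‖v‖ ^ 2) ^ 2 ≤ W * ∑ j ∈ R \ S, inner ℝ (X j - proj X S (X j)) ε ^ 2 :=
          hinner ▸ Finset.sum_mul_sq_le_sq_mul_sq _ _ _
      _ ≤ W * ((R \ S).card * (n * ν * b)) := by
          gcongr
          simpa using Finset.sum_le_sum hE
  have : 0 ≤ (R \ S).card * b := by positivity
  -- `nν ‖v‖⁴ ≤ nν W · |R \ S| nν b ≤ ‖v‖² · |R \ S| nν b`
  nlinarith

theorem norm_proj_add_sq_le_of_subset {T : Finset (Fin p)} {ν b : ℝ} {m : ℕ} (hn : 0 < n)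
    (hν : 0 < ν) (hb : 0 ≤ b) (hRE : RECond X ν m) (hST : (S ∪ T).card ≤ m)
    (μ ε : EuclideanSpace ℝ (Fin n))
    (hE : ∀ j ∉ T, inner ℝ (X j - proj X T (X j)) ε ^ 2 ≤ n * ν * b) :
    ‖proj X S (μ + ε)‖ ^ 2 ≤
      ‖proj X T (μ + ε)‖ ^ 2 + 2 * (‖μ - proj X T μ‖ ^ 2 + S.card * b) := by
  set R := S ∪ T
  have hTR : T ⊆ R := Finset.subset_union_right
  have hμ := norm_proj_sub_proj_le (X := X) hTR μ
  have hε : ‖proj X R ε - proj X T ε‖ ^ 2 ≤ S.card * b := by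
    refine (norm_proj_sub_proj_sq_le hn hν hb hRE hST hTR ε
      fun j hj => hE j (Finset.mem_sdiff.1 hj).2).trans ?_
    gcongr
    exact (Finset.union_sdiff_right S T).symm ▸ Finset.sdiff_subset
  calc ‖proj X S (μ + ε)‖ ^ 2 ≤ ‖proj X R (μ + ε)‖ ^ 2 := by
        rw [norm_proj_sq_eq_add Finset.subset_union_left]
        exact le_add_of_nonneg_right (sq_nonneg _)
    _ = ‖proj X T (μ + ε)‖ ^ 2
          + ‖(proj X R μ - proj X T μ) + (proj X R ε - proj X T ε)‖ ^ 2 := by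
        rw [norm_proj_sq_eq_add hTR, map_add, map_add, add_sub_add_comm]
    _ ≤ _ := by
        gcongr
        refine (norm_add_sq_le _ _).trans ?_
        gcongr

theorem norm_proj_add_sq_le (T : Finset (Fin p)) (μ ε : EuclideanSpace ℝ (Fin n)) :
    ‖proj X S (μ + ε)‖ ^ 2 ≤ ‖proj X T (μ + ε)‖ ^ 2 + 2 * (‖μ - proj X T μ‖ ^ 2 + ‖ε‖ ^ 2) :=
  calc ‖proj X S (μ + ε)‖ ^ 2 ≤ ‖μ + ε‖ ^ 2 := by gcongr; exact norm_proj_le _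
    _ = ‖proj X T (μ + ε)‖ ^ 2 + ‖(μ - proj X T μ) + (ε - proj X T ε)‖ ^ 2 := by
        rw [norm_sq_eq_norm_proj_sq_add (S := T), map_add, add_sub_add_comm]
    _ ≤ _ := by
        gcongr
        refine (norm_add_sq_le _ _).trans ?_
        gcongr
        exact norm_sub_proj_le ε

theorem norm_proj_sq_div_sub_penalty_le {T : Finset (Fin p)} {s : ℕ} {ν β b r : ℝ}
    (hn : 0 < n) (hν : 0 < ν) (hβ : 0 < β) (hb : 0 ≤ b) (hRE : RECond X ν (6 * s))
    (hT : T.card ≤ 2 * s) (μ ε : EuclideanSpace ℝ (Fin n)) (hμ : ‖μ - proj X T μ‖ ^ 2 ≤ r)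
    (hε : ‖ε‖ ^ 2 ≤ 2 * n)
    (hE : ∀ j ∉ T, inner ℝ (X j - proj X T (X j)) ε ^ 2 ≤ n * ν * b) (S : Finset (Fin p)) :
    ‖proj X S (μ + ε)‖ ^ 2 / β - (if 4 * s < S.card then 4 * n / β else 0) ≤
      (‖proj X T (μ + ε)‖ ^ 2 + 2 * (r + S.card * b)) / β := by
  have hSb : 0 ≤ S.card * b := by positivity
  split_ifs with hS
  · rw [sub_le_iff_le_add, ← add_div, div_le_div_iff_of_pos_right hβ]
    linarith [norm_proj_add_sq_le (X := X) (S := S) T μ ε]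
  · have hST : (S ∪ T).card ≤ 6 * s := (Finset.card_union_le S T).trans (by omega)
    rw [sub_zero, div_le_div_iff_of_pos_right hβ]
    linarith [norm_proj_add_sq_le_of_subset hn hν hb hRE hST μ ε hE]

theorem one_le_log_of_three_le (hp : 3 ≤ p) : 1 ≤ Real.log p := by
  rw [Real.le_log_iff_exp_le (by positivity)]
  have h3 : (3 : ℝ) ≤ p := by exact_mod_cast hp
  linarith [Real.exp_one_lt_d9]

theorem inv_pow_eq_exp (hp : 0 < p) (k : ℕ) : ((p : ℝ)⁻¹) ^ k = Real.exp (-(k * Real.log p)) := by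
  rw [← Real.exp_log (by positivity : (0 : ℝ) < (p : ℝ)⁻¹), ← Real.exp_nat_mul, Real.log_inv,
    mul_neg]

theorem postWt_le_mul {Y : EuclideanSpace ℝ (Fin n)} {S T : Finset (Fin p)} {s : ℕ}
    {β D c L : ℝ} (hp : 3 ≤ p) (hβ : 0 < β) (hD : max 2 (4 * L / β) ≤ D)
    (hT : T.card ≤ 2 * s)
    (hfit : ‖proj X S Y‖ ^ 2 / β - (if 4 * s < S.card then 4 * n / β else 0) ≤
      (‖proj X T Y‖ ^ 2 + 2 * (c * s * Real.log p + S.card * (L * Real.log p))) / β) :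
    postWt X Y β D s S ≤ postWt X Y β D s T *
      (Real.exp ((2 * D + (4 + 2 * c) / β) * s * Real.log p) * ((p : ℝ)⁻¹) ^ S.card) := by
  have hlog := one_le_log_of_three_le hp
  have hD2 : 2 ≤ D := (le_max_left _ _).trans hD
  have hDL : 2 * L / β ≤ D - 1 := by
    have := (le_max_right _ _).trans hD
    rw [mul_div_assoc] at this ⊢
    linarith
  have htrS : 0 ≤ LinearMap.trace ℝ _ (proj X S) := trace_proj (X := X) ▸ Nat.cast_nonneg _
  have htrT : 2 * LinearMap.trace ℝ _ (proj X T) / β ≤ 4 * s * Real.log p / β := by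
    refine div_le_div_of_nonneg_right ?_ hβ.le
    calc 2 * LinearMap.trace ℝ _ (proj X T) ≤ 2 * (2 * s) := by
          gcongr; exact trace_proj_le_card.trans (by exact_mod_cast hT)
      _ ≤ 4 * s * Real.log p := by nlinarith [(Nat.cast_nonneg s : (0 : ℝ) ≤ s)]
  have hcard : D * T.card * Real.log p ≤ D * (2 * s) * Real.log p := by
    gcongr; exact_mod_cast hT
  have hpen : 2 * L / β * S.card * Real.log p ≤ (D - 1) * S.card * Real.log p := by gcongr
  rw [inv_pow_eq_exp (by omega), postWt, postWt, ← Real.exp_add, ← Real.exp_add, Real.exp_le_exp,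
    if_neg (by omega : ¬ 4 * s < T.card), add_zero]
  linear_combination hfit + htrT + hcard + hpen + 2 / β * htrS

theorem sum_inv_pow_card_le_exp_one :
    ∑ S : Finset (Fin p), ((p : ℝ)⁻¹) ^ S.card ≤ Real.exp 1 := by
  calc ∑ S : Finset (Fin p), ((p : ℝ)⁻¹) ^ S.card = ((p : ℝ)⁻¹ + 1) ^ p := by
        simpa using Fin.sum_pow_mul_eq_add_pow ((p : ℝ)⁻¹) 1
    _ ≤ Real.exp 1 := by rw [add_comm]; exact Real.one_add_inv_pow_le_exp

theorem inv_sum_le_div_sum {ι : Type*} [Fintype ι] {w f : ι → ℝ} (hw : ∀ i, 0 < w i) (t : ι)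
    (h : ∀ i, w i ≤ w t * f i) : (∑ i, f i)⁻¹ ≤ w t / ∑ i, w i := by
  have hsum : ∑ i, w i ≤ w t * ∑ i, f i := by
    rw [Finset.mul_sum]; exact Finset.sum_le_sum fun i _ => h i
  rw [← div_mul_cancel_left₀ (hw t).ne']
  exact div_le_div_of_nonneg_left (hw t).le (Finset.sum_pos (fun i _ => hw i) ⟨t, by simp⟩) hsum

theorem log_one_div_le_of_exp_neg_le {x a : ℝ} (h : Real.exp (-a) ≤ x) : Real.log (1 / x) ≤ a := by
  rw [one_div, Real.log_inv, neg_le]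
  exact (Real.le_log_iff_exp_le ((Real.exp_pos _).trans_le h)).2 h

end SubsetSelection

open SubsetSelection in
theorem stmt16_general {n p s : ℕ} (hn : 0 < n) (hp : 3 ≤ p) (hs : 0 < s)
    (X : Fin p → EuclideanSpace ℝ (Fin n))
    {ν : ℝ} (hν : 0 < ν) (hRE : RECond X ν (6 * s))
    (θ : Fin p → ℝ)
    (ε Y : EuclideanSpace ℝ (Fin n)) (hY : Y = (∑ j, θ j • X j) + ε)
    (β D c L : ℝ) (hβ : 0 < β) (hL : 0 < L)
    (hD : max 2 (4 * L / β) ≤ D)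
    (That : Finset (Fin p)) (hThatcard : That.card ≤ 2 * s)
    (hThatrisk : ‖(∑ j, θ j • X j) - proj X That (∑ j, θ j • X j)‖ ^ 2 ≤
      c * s * Real.log p)
    (hF : ‖ε‖ ^ 2 ≤ 2 * n)
    (hE : ∀ S : Finset (Fin p), S.card < 6 * s → ∀ j ∉ S,
      (inner ℝ (X j - proj X S (X j)) ε : ℝ) ^ 2 ≤ (n : ℝ) * L * ν * Real.log p) :
    Real.exp (-1) * Real.exp (-(2 * D + (4 + 2 * c) / β) * s * Real.log p) ≤
      postPi X Y β D s That ∧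
    Real.log (1 / postPi X Y β D s That) ≤
      1 + (2 * D + (4 + 2 * c) / β) * s * Real.log p := by
  set C := 2 * D + (4 + 2 * c) / β
  have hb : 0 ≤ L * Real.log p := by positivity
  have hwt : ∀ S, postWt X Y β D s S ≤
      postWt X Y β D s That * (Real.exp (C * s * Real.log p) * ((p : ℝ)⁻¹) ^ S.card) := by
    refine fun S => postWt_le_mul hp hβ hD hThatcard ?_
    rw [hY]
    exact norm_proj_sq_div_sub_penalty_le hn hν hβ hb hRE hThatcard _ ε hThatrisk hF
      (fun j hj => (hE That (by omega) j hj).trans_eq (by ring)) S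
  have hπ : Real.exp (-1) * Real.exp (-C * s * Real.log p) ≤ postPi X Y β D s That :=
    calc Real.exp (-1) * Real.exp (-C * s * Real.log p)
        = (Real.exp (C * s * Real.log p) * Real.exp 1)⁻¹ := by
          rw [mul_inv, ← Real.exp_neg, ← Real.exp_neg, mul_comm]; ring_nf
      _ ≤ (∑ S : Finset (Fin p), Real.exp (C * s * Real.log p) * ((p : ℝ)⁻¹) ^ S.card)⁻¹ := by
          rw [← Finset.mul_sum]
          exact inv_anti₀ (by positivity) (by gcongr; exact sum_inv_pow_card_le_exp_one)
      _ ≤ postPi X Y β D s That := inv_sum_le_div_sum (fun _ => Real.exp_pos _) That hwt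
  refine ⟨hπ, log_one_div_le_of_exp_neg_le ?_⟩
  rwa [neg_add, Real.exp_add, ← neg_mul, ← neg_mul]

/-- under events A_n, E_n, F_n, p ≥ 3 and D ≥ max(2, 4L/β), with
C = 2D + (4 + 2c)/β one has π(T̂) ≥ e⁻¹ exp(−C s* log p), so log(1/π(T̂)) ≤ 1 + C s* log p. -/
theorem stmt16 {n p s : ℕ} (hn : 0 < n) (hp : 3 ≤ p) (hs : 0 < s) (hsp : 6 * s ≤ p)
    (X : Fin p → EuclideanSpace ℝ (Fin n))
    (hX : ∀ j, ‖X j‖ = Real.sqrt n)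
    {ν : ℝ} (hν : 0 < ν) (hRE : RECond X ν (6 * s))
    (θ : Fin p → ℝ) (T : Finset (Fin p)) (hT : T = Finset.univ.filter fun j => θ j ≠ 0)
    (hTcard : T.card = s)
    (ε Y : EuclideanSpace ℝ (Fin n)) (hY : Y = (∑ j, θ j • X j) + ε)
    (β D c L : ℝ) (hβ : 0 < β) (hc : 0 < c) (hL : 0 < L)
    (hD : max 2 (4 * L / β) ≤ D)
    (That : Finset (Fin p)) (hThatcard : That.card ≤ 2 * s)
    (hThatrisk : ‖(∑ j, θ j • X j) - proj X That (∑ j, θ j • X j)‖ ^ 2 ≤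
      c * s * Real.log p)
    (hF : ‖ε‖ ^ 2 ≤ 2 * n)
    (hE : ∀ S : Finset (Fin p), S.card < 6 * s → ∀ j ∉ S,
      (inner ℝ (X j - proj X S (X j)) ε : ℝ) ^ 2 ≤ (n : ℝ) * L * ν * Real.log p) :
    Real.exp (-1) * Real.exp (-(2 * D + (4 + 2 * c) / β) * s * Real.log p) ≤
      postPi X Y β D s That ∧
    Real.log (1 / postPi X Y β D s That) ≤
      1 + (2 * D + (4 + 2 * c) / β) * s * Real.log p :=
  stmt16_general hn hp hs X hν hRE θ ε Y hY β D c L hβ hL hD That hThatcard hThatrisk hF hE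

end
end

section
/- Suppose ‖δ‖₁ ≤ (8αλ_n/κ²) s*, where δ = θ̂ − θ. Then the thresholded set T̂ = {j : |θ̂_j| > 8αλ_n/κ²} satisfies |T̂| ≤ 2s*. -/
open scoped BigOperators
open Finset

/-- if ‖θ̂ − θ‖₁ ≤ (8αλ_n/κ²)s*, the thresholded set
T̂ = {j : |θ̂_j| > 8αλ_n/κ²} satisfies |T̂| ≤ 2s*, where λ_n = √(log p / n). -/
theorem stmt18 {n p s : ℕ} (hn : 0 < n) (hp : 2 ≤ p) (hs : 0 < s)
    (α κ : ℝ) (hα : 0 < α) (hκ : 0 < κ)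
    (θ θhat : Fin p → ℝ)
    (T : Finset (Fin p)) (hT : T = Finset.univ.filter fun j => θ j ≠ 0)
    (hTcard : T.card ≤ s)
    (hδ : ∑ j, |θhat j - θ j| ≤ 8 * α * Real.sqrt (Real.log p / n) / κ ^ 2 * s)
    (That : Finset (Fin p))
    (hThat : That = Finset.univ.filter fun j =>
      8 * α * Real.sqrt (Real.log p / n) / κ ^ 2 < |θhat j|) :
    That.card ≤ 2 * s := by
  set τ := 8 * α * Real.sqrt (Real.log p / n) / κ ^ 2 with hτdef
  have hτ : 0 < τ := by
    apply div_pos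
    · have hlog : 0 < Real.log p := Real.log_pos (by exact_mod_cast by omega)
      have : 0 < Real.log p / n := div_pos hlog (by exact_mod_cast hn)
      positivity
    · positivity
  -- each j ∈ That \ T has |δ j| ≥ τ
  have hterm : ∀ j ∈ That \ T, τ ≤ |θhat j - θ j| := by
    intro j hj
    rw [Finset.mem_sdiff, hThat, hT, Finset.mem_filter, Finset.mem_filter] at hj
    have h1 : τ < |θhat j| := hj.1.2
    have h2 : θ j = 0 := by
      by_contra h
      exact hj.2 ⟨Finset.mem_univ j, h⟩
    rw [h2, sub_zero]
    exact h1.le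
  have hsum : (That \ T).card • τ ≤ ∑ j ∈ That \ T, |θhat j - θ j| :=
    Finset.card_nsmul_le_sum _ _ _ hterm
  have hsub : ∑ j ∈ That \ T, |θhat j - θ j| ≤ ∑ j, |θhat j - θ j| :=
    Finset.sum_le_sum_of_subset_of_nonneg (Finset.subset_univ _)
      (fun _ _ _ => abs_nonneg _)
  have hkey : ((That \ T).card : ℝ) * τ ≤ (s : ℝ) * τ := by
    have := le_trans hsum (le_trans hsub hδ)
    rw [nsmul_eq_mul] at this
    linarith [this]
  have hcard : (That \ T).card ≤ s := by
    have := le_of_mul_le_mul_right hkey hτ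
    exact_mod_cast this
  calc That.card ≤ (That \ T).card + T.card := Finset.card_le_card_sdiff_add_card
    _ ≤ s + s := add_le_add hcard hTcard
    _ = 2 * s := by ring
end
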